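/- arXiv:2311.14219 — 5 statements merged into one kernel-verified Lean document; each statement's English description precedes it below -/
import Mathlib

section
/- Let X be a measurable space, u a capacity on X, and f, g : X → ℝ bounded measurable functions. If f and g are comonotonic, then I^u(f + g) = I^u(f) + I^u(g); that is, the Choquet integral with respect to u is comonotonically additive. -/
open MeasureTheory

/-- A capacity on a measurable space `X`. -/
def IsCapacity {X : Type*} [MeasurableSpace X] (u : Set X → ℝ) : Prop :=
  u ∅ = 0 ∧ u Set.univ = 1 ∧
    ∀ A B : Set X, MeasurableSet A → MeasurableSet B → A ⊆ B → u A ≤ u B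

/-- The Choquet integral of `f` with respect to `u`. -/
noncomputable def choquet {X : Type*} (u : Set X → ℝ) (f : X → ℝ) : ℝ :=
  (∫ r in Set.Ioi (0 : ℝ), u {x | f x ≥ r}) +
    ∫ r in Set.Iio (0 : ℝ), (u {x | f x ≥ r} - 1)

/-- Two real-valued functions are comonotonic. -/
def Comonotonic {X : Type*} (f g : X → ℝ) : Prop :=
  ∀ x y, (f x - f y) * (g x - g y) ≥ 0

/-!
Comonotonicity says exactly that `f = a ∘ h` and `g = (id - a) ∘ h` for `h = f + g` and some
nondecreasing `a` with `id - a` nondecreasing (hence `a` is continuous). For a continuous Stieltjes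
function `F` and `m ≤ h ≤ M`, the level sets of `F ∘ h` are level sets of `h` cut at the quantile
`F.quantile s`, and the quantile pushes Lebesgue measure on `(F m, F M]` forward to `dF` on
`(m, M]`, so `I^u(F ∘ h) = F m + ∫_{(m, M]} u{h ≥ t} dF(t)`. As `da + d(id - a)` is Lebesgue
measure, the formulas for `f` and `g` add up to the one for `h = id ∘ h`.
-/

open Set

theorem setIntegral_Ioi_zero_add_setIntegral_Iio_zero_sub_one {φ : ℝ → ℝ}
    (hφ : LocallyIntegrable φ) {c d : ℝ} (hc : ∀ s ≤ c, φ s = 1) (hd : ∀ s, d < s → φ s = 0) :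
    (∫ s in Ioi 0, φ s) + ∫ s in Iio 0, (φ s - 1) = c + ∫ s in c..d, φ s := by
  have hint : ∀ a b, IntervalIntegrable φ volume a b := fun a b =>
    (hφ.integrableOn_isCompact isCompact_uIcc).intervalIntegrable
  have hIoi : ∀ a, IntegrableOn φ (Ioi a) := fun a =>
    (hφ.integrableOn_isCompact (isCompact_Icc : IsCompact (Icc a d))).of_forall_sdiff_eq_zero
      measurableSet_Ioi fun s hs => hd s (by grind)
  have hIic : ∀ a, IntegrableOn (fun s => φ s - 1) (Iic a) := fun a =>
    ((hφ.sub (locallyIntegrable_const 1)).integrableOn_isCompact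
      (isCompact_Icc : IsCompact (Icc c a))).of_forall_sdiff_eq_zero measurableSet_Iic
      fun s hs => by simp [hc s (by grind)]
  have hpos : ∫ s in Ioi 0, φ s = ∫ s in (0 : ℝ)..d, φ s := by
    have hzero : ∫ s in Ioi d, φ s = 0 := setIntegral_eq_zero_of_forall_eq_zero hd
    rw [← intervalIntegral.integral_Ioi_sub_Ioi' (hIoi 0) (hIoi d), hzero, sub_zero]
  have hneg : ∫ s in Iio 0, (φ s - 1) = c + ∫ s in c..0, φ s := by
    have hzero : ∫ s in Iic c, (φ s - 1) = 0 :=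
      setIntegral_eq_zero_of_forall_eq_zero fun s hs => by simp [hc s hs]
    have hsplit := intervalIntegral.integral_Iic_sub_Iic (hIic c) (hIic 0)
    rw [hzero, sub_zero, intervalIntegral.integral_sub (hint c 0) intervalIntegrable_const]
      at hsplit
    rw [← integral_Iic_eq_integral_Iio, hsplit, intervalIntegral.integral_const]
    simp only [smul_eq_mul, mul_one]
    ring
  rw [hpos, hneg, ← intervalIntegral.integral_add_adjacent_intervals (hint c 0) (hint 0 d)]
  ring

namespace StieltjesFunction

variable (F : StieltjesFunction ℝ)

noncomputable def quantile (s : ℝ) : ℝ :=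
  sInf {t | s ≤ F t}

variable {F}

theorem quantile_le_iff (hF : Continuous F) {m M s : ℝ} (hs : s ∈ Ioc (F m) (F M)) (t : ℝ) :
    F.quantile s ≤ t ↔ s ≤ F t := by
  have hne : {t | s ≤ F t}.Nonempty := ⟨M, hs.2⟩
  have hbdd : BddBelow {t | s ≤ F t} :=
    ⟨m, fun t ht => le_of_not_gt fun htm => (F.mono htm.le).not_gt (hs.1.trans_le ht)⟩
  refine ⟨fun h => ?_, fun h => csInf_le hbdd h⟩
  exact ((isClosed_le continuous_const hF).csInf_mem hne hbdd).trans (F.mono h)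

theorem monotoneOn_quantile (hF : Continuous F) (m M : ℝ) :
    MonotoneOn F.quantile (Ioc (F m) (F M)) := fun _ hs _ hs' hss' =>
  (quantile_le_iff hF hs _).2 (hss'.trans ((quantile_le_iff hF hs' _).1 le_rfl))

theorem map_quantile_volume (hF : Continuous F) (m M : ℝ) :
    (volume.restrict (Ioc (F m) (F M))).map F.quantile = F.measure.restrict (Ioc m M) := by
  refine (Measure.ext_of_Ioc _ _ fun p q _ => ?_).symm
  have hpre : F.quantile ⁻¹' Ioc p q ∩ Ioc (F m) (F M) = Ioc (F p) (F q) ∩ Ioc (F m) (F M) := by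
    ext s
    simp only [mem_inter_iff, mem_preimage]
    refine and_congr_left fun hs => ?_
    rw [mem_Ioc, mem_Ioc, ← not_le, quantile_le_iff hF hs, quantile_le_iff hF hs, not_le]
  rw [Measure.map_apply_of_aemeasurable
      (aemeasurable_restrict_of_monotoneOn measurableSet_Ioc (monotoneOn_quantile hF m M))
      measurableSet_Ioc,
    Measure.restrict_apply measurableSet_Ioc, Measure.restrict_apply' measurableSet_Ioc, hpre,
    Ioc_inter_Ioc, Ioc_inter_Ioc, measure_Ioc, Real.volume_Ioc, F.mono.map_max, F.mono.map_min]

end StieltjesFunction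

section Capacity

variable {X : Type*} [MeasurableSpace X] {u : Set X → ℝ}

theorem IsCapacity.antitone_survival (hu : IsCapacity u) {f : X → ℝ} (hf : Measurable f) :
    Antitone fun r => u {x | f x ≥ r} := fun _ _ hrs =>
  hu.2.2 _ _ (hf measurableSet_Ici) (hf measurableSet_Ici) fun _ hx => hrs.trans hx

theorem IsCapacity.choquet_eq_intervalIntegral (hu : IsCapacity u) {f : X → ℝ}
    (hf : Measurable f) {c d : ℝ} (hc : ∀ x, c ≤ f x) (hd : ∀ x, f x ≤ d) :
    choquet u f = c + ∫ r in c..d, u {x | f x ≥ r} := by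
  refine setIntegral_Ioi_zero_add_setIntegral_Iio_zero_sub_one
    (hu.antitone_survival hf).locallyIntegrable (fun r hr => ?_) (fun r hr => ?_)
  · rw [show {x | f x ≥ r} = univ from eq_univ_of_forall fun x => hr.trans (hc x), hu.2.1]
  · rw [show {x | f x ≥ r} = ∅ from eq_empty_of_forall_notMem fun x hx => (hd x).not_gt
      (hr.trans_le hx), hu.1]

theorem IsCapacity.choquet_comp_eq_setIntegral (hu : IsCapacity u) {h : X → ℝ}
    (hh : Measurable h) {F : StieltjesFunction ℝ} (hF : Continuous F) {m M : ℝ} (hmM : m ≤ M)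
    (hm : ∀ x, m ≤ h x) (hM : ∀ x, h x ≤ M) :
    choquet u (F ∘ h) = F m + ∫ t in Ioc m M, u {x | h x ≥ t} ∂F.measure := by
  have hlevel : ∀ s ∈ Ioc (F m) (F M), {x | (F ∘ h) x ≥ s} = {x | h x ≥ F.quantile s} :=
    fun s hs => by ext x; exact (F.quantile_le_iff hF hs (h x)).symm
  rw [hu.choquet_eq_intervalIntegral (hF.measurable.comp hh) (fun x => F.mono (hm x))
      (fun x => F.mono (hM x)), intervalIntegral.integral_of_le (F.mono hmM),
    setIntegral_congr_fun measurableSet_Ioc fun s hs => congrArg u (hlevel s hs),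
    ← F.map_quantile_volume hF, integral_map
      (aemeasurable_restrict_of_monotoneOn measurableSet_Ioc (F.monotoneOn_quantile hF m M))
      (hu.antitone_survival hh).measurable.aestronglyMeasurable]

end Capacity

theorem continuous_of_monotone_of_monotone_sub {a : ℝ → ℝ} (ha : Monotone a)
    (ha' : Monotone fun t => t - a t) : Continuous a := by
  refine (LipschitzWith.of_dist_le_mul fun s t => ?_).continuous (K := 1)
  rw [Real.dist_eq, Real.dist_eq, NNReal.coe_one, one_mul, abs_le]
  have := neg_abs_le (s - t)
  have := le_abs_self (s - t)
  rcases le_total s t with hst | hst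
  · have := ha hst; have : s - a s ≤ t - a t := ha' hst; constructor <;> linarith
  · have := ha hst; have : t - a t ≤ s - a s := ha' hst; constructor <;> linarith

section Comonotonic

variable {X : Type*} {f g : X → ℝ}

theorem Comonotonic.le_and_le_of_add_le (hfg : Comonotonic f g) {x y : X}
    (hxy : f x + g x ≤ f y + g y) : f x ≤ f y ∧ g x ≤ g y := by
  have := hfg y x
  constructor <;> nlinarith

/-- Each `t ↦ f y + max (t - (f y + g y)) 0` is nondecreasing with slope at most one and takes the
value `f y` at `f y + g y`; comonotonicity makes the infimum take the value `f x` at `f x + g x`. -/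
noncomputable def comonotoneFactor (f g : X → ℝ) (t : ℝ) : ℝ :=
  ⨅ y, (f y + max (t - (f y + g y)) 0)

section Nonempty

variable [Nonempty X]

theorem Comonotonic.bddBelow_range_add_max (hfg : Comonotonic f g) (t : ℝ) :
    BddBelow (range fun y => f y + max (t - (f y + g y)) 0) := by
  obtain ⟨x₀⟩ := ‹Nonempty X›
  refine ⟨min (f x₀) (t - g x₀), forall_mem_range.2 fun y => ?_⟩
  have := le_max_left (t - (f y + g y)) 0
  have := le_max_right (t - (f y + g y)) 0
  rcases le_total (f y + g y) (f x₀ + g x₀) with hy | hy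
  · have := (hfg.le_and_le_of_add_le hy).2
    exact (min_le_right _ _).trans (by linarith)
  · have := (hfg.le_and_le_of_add_le hy).1
    exact (min_le_left _ _).trans (by linarith)

theorem Comonotonic.monotone_comonotoneFactor (hfg : Comonotonic f g) :
    Monotone (comonotoneFactor f g) := fun s t hst =>
  ciInf_mono (hfg.bddBelow_range_add_max s) fun y => by gcongr

theorem Comonotonic.monotone_sub_comonotoneFactor (hfg : Comonotonic f g) :
    Monotone fun t => t - comonotoneFactor f g t := by
  intro s t hst
  have hterm (y : X) :
      comonotoneFactor f g t - (t - s) ≤ f y + max (s - (f y + g y)) 0 := by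
    have : comonotoneFactor f g t ≤ f y + max (t - (f y + g y)) 0 :=
      ciInf_le (hfg.bddBelow_range_add_max t) y
    have := le_max_left (s - (f y + g y)) 0
    have := le_max_right (s - (f y + g y)) 0
    have : max (t - (f y + g y)) 0 ≤ max (s - (f y + g y)) 0 + (t - s) :=
      max_le (by linarith) (by linarith)
    linarith
  have : comonotoneFactor f g t - (t - s) ≤ comonotoneFactor f g s := le_ciInf hterm
  linarith

theorem Comonotonic.comonotoneFactor_add (hfg : Comonotonic f g) (x : X) :
    comonotoneFactor f g (f x + g x) = f x := by
  refine le_antisymm ((ciInf_le (hfg.bddBelow_range_add_max _) x).trans (by simp))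
    (le_ciInf fun y => ?_)
  rcases le_total (f y + g y) (f x + g x) with hy | hy
  · have := (hfg.le_and_le_of_add_le hy).2
    have := le_max_left (f x + g x - (f y + g y)) 0
    linarith
  · have := (hfg.le_and_le_of_add_le hy).1
    have := le_max_right (f x + g x - (f y + g y)) 0
    linarith

end Nonempty

theorem Comonotonic.exists_stieltjesFunction_comp_add (hfg : Comonotonic f g) :
    ∃ A B : StieltjesFunction ℝ, Continuous A ∧ Continuous B ∧ A + B = StieltjesFunction.id ∧
      A ∘ (f + g) = f ∧ B ∘ (f + g) = g := by
  rcases isEmpty_or_nonempty X with hX | hX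
  · exact ⟨0, .id, continuous_const, continuous_id, zero_add _, funext isEmptyElim,
      funext isEmptyElim⟩
  have hcont := continuous_of_monotone_of_monotone_sub hfg.monotone_comonotoneFactor
    hfg.monotone_sub_comonotoneFactor
  refine ⟨⟨comonotoneFactor f g, hfg.monotone_comonotoneFactor,
      fun _ => hcont.continuousWithinAt⟩,
    ⟨fun t => t - comonotoneFactor f g t, hfg.monotone_sub_comonotoneFactor,
      fun _ => (continuous_id.sub hcont).continuousWithinAt⟩, hcont, continuous_id.sub hcont,
    StieltjesFunction.ext fun t => add_sub_cancel _ t, funext hfg.comonotoneFactor_add,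
    funext fun x => ?_⟩
  change f x + g x - comonotoneFactor f g (f x + g x) = g x
  rw [hfg.comonotoneFactor_add]
  ring

end Comonotonic

/-- The Choquet integral is comonotonically additive. -/
theorem choquet_comonotonic_additive {X : Type*} [MeasurableSpace X] (u : Set X → ℝ)
    (hu : IsCapacity u) (f g : X → ℝ) (hf : Measurable f) (hg : Measurable g)
    (hfb : ∃ M, ∀ x, |f x| ≤ M) (hgb : ∃ M, ∀ x, |g x| ≤ M)
    (hcomon : Comonotonic f g) :
    choquet u (f + g) = choquet u f + choquet u g := by
  obtain ⟨A, B, hA, hB, hAB, hAf, hBg⟩ := hcomon.exists_stieltjesFunction_comp_add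
  obtain ⟨Mf, hMf⟩ := hfb
  obtain ⟨Mg, hMg⟩ := hgb
  set K := |Mf| + |Mg|
  have hK : ∀ x, |(f + g) x| ≤ K := fun x => (abs_add_le _ _).trans
    (add_le_add ((hMf x).trans (le_abs_self _)) ((hMg x).trans (le_abs_self _)))
  have hchoquet {F : StieltjesFunction ℝ} (hF : Continuous F) :=
    hu.choquet_comp_eq_setIntegral (hf.add hg) hF (neg_le_self (by positivity))
      (fun x => (abs_le.1 (hK x)).1) (fun x => (abs_le.1 (hK x)).2)
  have hint (F : StieltjesFunction ℝ) :
      IntegrableOn (fun t => u {x | (f + g) x ≥ t}) (Ioc (-K) K) F.measure :=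
    ((hu.antitone_survival (hf.add hg)).locallyIntegrable.integrableOn_isCompact
      isCompact_Icc).mono_set Ioc_subset_Icc_self
  rw [show choquet u f + choquet u g = choquet u (A ∘ (f + g)) + choquet u (B ∘ (f + g)) by
    rw [hAf, hBg]]
  change choquet u (StieltjesFunction.id ∘ (f + g)) = _
  rw [hchoquet hA, hchoquet hB, hchoquet continuous_id, ← hAB, StieltjesFunction.measure_add,
    Measure.restrict_add, integral_add_measure (hint A) (hint B), StieltjesFunction.add_apply]
  ring
end

section
/- Let X be a measurable space and u a capacity on X that is additive, i.e. u(A ∪ B) = u(A) + u(B) for every pair of disjoint measurable subsets A, B of X. Then the Choquet integral with respect to u is linear: for all real numbers a, b and all bounded measurable functions f, g : X → ℝ, I^u(a·f + b·g) = a·I^u(f) + b·I^u(g). -/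
open MeasureTheory

/-!
For additive `u`, the level sets of `f` split along a measurable partition `A, Aᶜ`, so the Choquet
integral restricted to `A` (`choquetOn`) is additive in `A`. Together with invariance under adding
constants this gives `I(f + c 𝟙_A) = I(f) + c u(A)`, and by induction the same for finite sums of
indicators. A bounded nonnegative `g` lies within `1/n` of such a sum, the staircase `⌊n g⌋ / n`,
and `I` is monotone and commutes with adding constants, so `I(f + g) = I(f) + I(g)`. Positive
homogeneity is the substitution `r ↦ c r` in the level-set integral, and additivity gives
`I(-f) = -I(f)`.
-/

open Set intervalIntegral

section

variable {X : Type*} {u : Set X → ℝ} {A B : Set X} {f g : X → ℝ} {M N : ℝ}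

noncomputable def choquetOn (u : Set X → ℝ) (A : Set X) (f : X → ℝ) : ℝ :=
  (∫ r in Ioi (0 : ℝ), u (A ∩ {x | f x ≥ r})) +
    ∫ r in Iio (0 : ℝ), (u (A ∩ {x | f x ≥ r}) - u A)

theorem choquetOn_univ (h1 : u univ = 1) (f : X → ℝ) : choquetOn u univ f = choquet u f := by
  simp [choquetOn, choquet, h1]

theorem choquetOn_congr (h : EqOn f g A) : choquetOn u A f = choquetOn u A g := by
  have hlevel (r : ℝ) : A ∩ {x | f x ≥ r} = A ∩ {x | g x ≥ r} := by
    ext x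
    exact and_congr_right fun hx => show f x ≥ r ↔ g x ≥ r by rw [h hx]
  simp only [choquetOn, hlevel]

theorem abs_add_indicator_le (hfM : ∀ x, |f x| ≤ M) (c : ℝ) (x : X) :
    |f x + A.indicator (fun _ => c) x| ≤ M + |c| :=
  (abs_add_le _ _).trans <| add_le_add (hfM x) <| by
    simpa only [Real.norm_eq_abs] using norm_indicator_le_norm_self (s := A) (fun _ => c) x

theorem abs_mul_le_of_abs_le (hfM : ∀ x, |f x| ≤ M) (c : ℝ) (x : X) : |c * f x| ≤ |c| * M := by
  rw [abs_mul]
  exact mul_le_mul_of_nonneg_left (hfM x) (abs_nonneg c)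

variable [MeasurableSpace X]

def IsAdditive (u : Set X → ℝ) : Prop :=
  ∀ A B : Set X, MeasurableSet A → MeasurableSet B → Disjoint A B → u (A ∪ B) = u A + u B

theorem antitone_inter_levelSet (hu : IsCapacity u) (hA : MeasurableSet A) (hf : Measurable f) :
    Antitone fun r => u (A ∩ {x | f x ≥ r}) := fun _ _ hrs =>
  hu.2.2 _ _ (hA.inter (measurableSet_le measurable_const hf))
    (hA.inter (measurableSet_le measurable_const hf))
    (inter_subset_inter_right _ fun _ hx => le_trans hrs hx)

theorem choquetOn_eq_intervalIntegral (hu : IsCapacity u) (hA : MeasurableSet A)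
    (hf : Measurable f) {a b : ℝ} (ha : a ≤ 0) (hb : 0 ≤ b) (hfab : ∀ x, f x ∈ Icc a b) :
    choquetOn u A f = (∫ r in a..b, u (A ∩ {x | f x ≥ r})) + a * u A := by
  set φ := fun r => u (A ∩ {x | f x ≥ r})
  have hφ (c d : ℝ) : IntervalIntegrable φ volume c d :=
    (antitone_inter_levelSet hu hA hf).intervalIntegrable
  have top : ∫ r in Ioi 0, φ r = ∫ r in 0..b, φ r := by
    rw [integral_of_le hb, setIntegral_eq_of_subset_of_forall_sdiff_eq_zero measurableSet_Ioi
      Ioc_subset_Ioi_self]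
    rintro r ⟨hr0, hr⟩
    have hbr : b < r := by simp_all
    have hempty : A ∩ {x | f x ≥ r} = ∅ :=
      eq_empty_of_forall_notMem fun x hx => (((hfab x).2.trans_lt hbr).trans_le hx.2).false
    simp only [φ, hempty, hu.1]
  have bottom : ∫ r in Iio 0, (φ r - u A) = ∫ r in a..0, (φ r - u A) := by
    rw [integral_of_le ha, ← integral_Iic_eq_integral_Iio,
      setIntegral_eq_of_subset_of_forall_sdiff_eq_zero measurableSet_Iic Ioc_subset_Iic_self]
    rintro r ⟨hr0, hr⟩
    have hra : r ≤ a := by simp_all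
    have hall : A ∩ {x | f x ≥ r} = A := inter_eq_left.2 fun x _ => hra.trans (hfab x).1
    simp only [φ, hall, sub_self]
  rw [choquetOn, top, bottom, integral_sub (hφ _ _) intervalIntegrable_const,
    intervalIntegral.integral_const, ← integral_add_adjacent_intervals (hφ a 0) (hφ 0 b),
    smul_eq_mul]
  ring

theorem choquetOn_add_const (hu : IsCapacity u) (hA : MeasurableSet A) (hf : Measurable f)
    (hfM : ∀ x, |f x| ≤ M) (c : ℝ) :
    choquetOn u A (fun x => f x + c) = choquetOn u A f + c * u A := by
  have hM := le_abs_self M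
  have hM₀ := abs_nonneg M
  obtain ⟨hc₁, hc₂⟩ := abs_le.1 (le_refl |c|)
  have hlevel (r : ℝ) : {x | f x + c ≥ r} = {x | f x ≥ r - c} := by
    ext x
    exact show r ≤ f x + c ↔ r - c ≤ f x from sub_le_iff_le_add.symm
  rw [choquetOn_eq_intervalIntegral hu hA (hf.add_const c) (a := -(|M| + |c|)) (b := |M| + |c|)
      (by linarith) (by linarith) fun x => by constructor <;> linarith [abs_le.1 (hfM x)],
    choquetOn_eq_intervalIntegral hu hA hf (a := -(|M| + |c|) - c) (b := |M| + |c| - c)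
      (by linarith) (by linarith) fun x => by constructor <;> linarith [abs_le.1 (hfM x)]]
  simp only [hlevel]
  rw [integral_comp_sub_right (fun r => u (A ∩ {x | f x ≥ r}))]
  ring

theorem choquetOn_union (hu : IsCapacity u) (hadd : IsAdditive u) (hA : MeasurableSet A)
    (hB : MeasurableSet B) (hAB : Disjoint A B) (hf : Measurable f) (hfM : ∀ x, |f x| ≤ M) :
    choquetOn u (A ∪ B) f = choquetOn u A f + choquetOn u B f := by
  have hbound (x : X) : f x ∈ Icc (-|M|) |M| := abs_le.1 ((hfM x).trans (le_abs_self M))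
  have hlevel (r : ℝ) :
      u ((A ∪ B) ∩ {x | f x ≥ r}) = u (A ∩ {x | f x ≥ r}) + u (B ∩ {x | f x ≥ r}) := by
    rw [union_inter_distrib_right]
    exact hadd _ _ (hA.inter (measurableSet_le measurable_const hf))
      (hB.inter (measurableSet_le measurable_const hf))
      (hAB.mono inter_subset_left inter_subset_left)
  rw [choquetOn_eq_intervalIntegral hu (hA.union hB) hf (neg_nonpos.2 (abs_nonneg M))
      (abs_nonneg M) hbound,
    choquetOn_eq_intervalIntegral hu hA hf (neg_nonpos.2 (abs_nonneg M)) (abs_nonneg M) hbound,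
    choquetOn_eq_intervalIntegral hu hB hf (neg_nonpos.2 (abs_nonneg M)) (abs_nonneg M) hbound,
    hadd _ _ hA hB hAB]
  simp only [hlevel]
  rw [integral_add (antitone_inter_levelSet hu hA hf).intervalIntegrable
    (antitone_inter_levelSet hu hB hf).intervalIntegrable]
  ring

theorem choquet_zero (hu : IsCapacity u) : choquet u (fun _ => 0) = 0 := by
  rw [← choquetOn_univ hu.2.1, choquetOn_eq_intervalIntegral hu MeasurableSet.univ
    measurable_const le_rfl le_rfl fun _ => ⟨le_rfl, le_rfl⟩]
  simp

theorem choquet_add_const (hu : IsCapacity u) (hf : Measurable f) (hfM : ∀ x, |f x| ≤ M)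
    (c : ℝ) : choquet u (fun x => f x + c) = choquet u f + c := by
  rw [← choquetOn_univ hu.2.1, ← choquetOn_univ hu.2.1,
    choquetOn_add_const hu MeasurableSet.univ hf hfM, hu.2.1, mul_one]

theorem choquet_mono (hu : IsCapacity u) (hf : Measurable f) (hg : Measurable g)
    (hfM : ∀ x, |f x| ≤ M) (hgN : ∀ x, |g x| ≤ N) (hfg : ∀ x, f x ≤ g x) :
    choquet u f ≤ choquet u g := by
  have hM := abs_nonneg M
  have hN := abs_nonneg N
  rw [← choquetOn_univ hu.2.1, ← choquetOn_univ hu.2.1,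
    choquetOn_eq_intervalIntegral hu MeasurableSet.univ hf (a := -(|M| + |N|)) (b := |M| + |N|)
      (by linarith) (by linarith) fun x => abs_le.1 ((hfM x).trans (by linarith [le_abs_self M])),
    choquetOn_eq_intervalIntegral hu MeasurableSet.univ hg (a := -(|M| + |N|)) (b := |M| + |N|)
      (by linarith) (by linarith)
      fun x => abs_le.1 ((hgN x).trans (by linarith [le_abs_self N]))]
  gcongr 1
  refine integral_mono_on (by linarith)
    (antitone_inter_levelSet hu MeasurableSet.univ hf).intervalIntegrable
    (antitone_inter_levelSet hu MeasurableSet.univ hg).intervalIntegrable fun r _ => ?_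
  exact hu.2.2 _ _ (MeasurableSet.univ.inter (measurableSet_le measurable_const hf))
    (MeasurableSet.univ.inter (measurableSet_le measurable_const hg))
    (inter_subset_inter_right _ fun x hx => le_trans hx (hfg x))

theorem choquet_le_add_of_le_add (hu : IsCapacity u) (hf : Measurable f) (hg : Measurable g)
    (hfM : ∀ x, |f x| ≤ M) (hgN : ∀ x, |g x| ≤ N) {ε : ℝ} (hε : 0 ≤ ε)
    (hfg : ∀ x, f x ≤ g x + ε) : choquet u f ≤ choquet u g + ε := by
  have hgε (x : X) : |g x + ε| ≤ N + ε :=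
    (abs_add_le _ _).trans (by rw [abs_of_nonneg hε]; linarith [hgN x])
  rw [← choquet_add_const hu hg hgN]
  exact choquet_mono hu hf (hg.add_const ε) hfM hgε hfg

theorem choquet_add_indicator (hu : IsCapacity u) (hadd : IsAdditive u) (hA : MeasurableSet A)
    (hf : Measurable f) (hfM : ∀ x, |f x| ≤ M) (c : ℝ) :
    choquet u (fun x => f x + A.indicator (fun _ => c) x) = choquet u f + c * u A := by
  have hF : Measurable fun x => f x + A.indicator (fun _ => c) x :=
    hf.add (measurable_const.indicator hA)
  rw [← choquetOn_univ hu.2.1, ← choquetOn_univ hu.2.1, ← union_compl_self A,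
    choquetOn_union hu hadd hA hA.compl disjoint_compl_right hF (abs_add_indicator_le hfM c),
    choquetOn_union hu hadd hA hA.compl disjoint_compl_right hf hfM,
    choquetOn_congr (g := fun x => f x + c) fun x hx => by simp [hx],
    choquetOn_congr (A := Aᶜ) (g := f) fun x hx => by simp [indicator_of_notMem hx],
    choquetOn_add_const hu hA hf hfM]
  ring

theorem choquet_add_sum_indicator (hu : IsCapacity u) (hadd : IsAdditive u) {ι : Type*}
    (s : Finset ι) {A : ι → Set X} (hA : ∀ i, MeasurableSet (A i)) (c : ι → ℝ)
    (hf : Measurable f) (hfM : ∀ x, |f x| ≤ M) :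
    choquet u (fun x => f x + ∑ i ∈ s, (A i).indicator (fun _ => c i) x) =
      choquet u f + ∑ i ∈ s, c i * u (A i) := by
  classical
  induction s using Finset.induction_on generalizing f M with
  | empty => simp
  | insert i s hi ih =>
    have hfi : Measurable fun x => f x + (A i).indicator (fun _ => c i) x :=
      hf.add (measurable_const.indicator (hA i))
    simp only [Finset.sum_insert hi, ← add_assoc]
    rw [ih hfi (abs_add_indicator_le hfM (c i)), choquet_add_indicator hu hadd (hA i) hf hfM]

end

section

variable {X : Type*} {g : X → ℝ} {n K : ℕ}

noncomputable def staircase (g : X → ℝ) (n K : ℕ) (x : X) : ℝ :=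
  ∑ k ∈ Finset.range K, {y | g y ≥ (k + 1) / n}.indicator (fun _ => (n : ℝ)⁻¹) x

theorem staircase_eq_floor (hn : 0 < n) {x : X} (hgx : 0 ≤ g x) (hK : n * g x < K) :
    staircase g n K x = ⌊n * g x⌋₊ / n := by
  classical
  have hn' : (0 : ℝ) < n := Nat.cast_pos.2 hn
  have hngx : 0 ≤ n * g x := mul_nonneg hn'.le hgx
  have hfilter : {k ∈ Finset.range K | x ∈ {y | g y ≥ ((k : ℕ) + 1 : ℝ) / n}} =
      Finset.range ⌊n * g x⌋₊ := by
    ext k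
    have hk : k < ⌊n * g x⌋₊ ↔ (k : ℝ) + 1 ≤ n * g x := by
      rw [← Nat.add_one_le_iff, Nat.le_floor_iff hngx, Nat.cast_add_one]
    simp only [Finset.mem_filter, Finset.mem_range, mem_ofPred_eq, ge_iff_le, div_le_iff₀ hn',
      mul_comm (g x), hk]
    exact ⟨And.right, fun h => ⟨by exact_mod_cast (h.trans_lt hK).le, h⟩⟩
  rw [staircase, Finset.sum_indicator_eq_sum_filter, hfilter, Finset.sum_const, Finset.card_range,
    nsmul_eq_mul, div_eq_mul_inv]

theorem staircase_nonneg (x : X) : 0 ≤ staircase g n K x :=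
  Finset.sum_nonneg fun _ _ => indicator_nonneg (fun _ _ => by positivity) x

theorem staircase_le_le (hn : 0 < n) {x : X} (hgx : 0 ≤ g x) (hK : n * g x < K) :
    staircase g n K x ≤ g x ∧ g x ≤ staircase g n K x + (n : ℝ)⁻¹ := by
  have hn' : (0 : ℝ) < n := Nat.cast_pos.2 hn
  have hfloor := Nat.floor_le (mul_nonneg hn'.le hgx)
  have hfloor' := Nat.lt_floor_add_one ((n : ℝ) * g x)
  rw [staircase_eq_floor hn hgx hK]
  constructor
  · rw [div_le_iff₀ hn']
    linarith
  · calc g x ≤ (⌊n * g x⌋₊ + 1) / n := (le_div_iff₀ hn').2 (by linarith)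
      _ = ⌊n * g x⌋₊ / n + (n : ℝ)⁻¹ := by ring

end

section

variable {X : Type*} [MeasurableSpace X] {u : Set X → ℝ} {f g : X → ℝ} {M N : ℝ}

theorem choquet_add_of_nonneg (hu : IsCapacity u) (hadd : IsAdditive u) (hf : Measurable f)
    (hg : Measurable g) (hfM : ∀ x, |f x| ≤ M) (hgN : ∀ x, |g x| ≤ N) (hg₀ : ∀ x, 0 ≤ g x) :
    choquet u (fun x => f x + g x) = choquet u f + choquet u g := by
  refine eq_of_abs_sub_le_all fun ε hε => ?_
  obtain ⟨n, hn⟩ := exists_nat_gt ε⁻¹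
  have hn₀ : 0 < n := Nat.cast_pos.1 ((inv_pos.2 hε).trans hn)
  have hnε : (n : ℝ)⁻¹ ≤ ε := (inv_le_comm₀ (Nat.cast_pos.2 hn₀) hε).2 hn.le
  obtain ⟨K, hK⟩ := exists_nat_gt (n * N)
  have hgK (x : X) : n * g x < K :=
    (mul_le_mul_of_nonneg_left (abs_le.1 (hgN x)).2 n.cast_nonneg).trans_lt hK
  set s := staircase g n K
  have hs (x : X) := staircase_le_le hn₀ (hg₀ x) (hgK x)
  have hsN (x : X) : |s x| ≤ N := by
    rw [abs_of_nonneg (staircase_nonneg x)]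
    exact (hs x).1.trans ((le_abs_self _).trans (hgN x))
  have hlevel (k : ℕ) : MeasurableSet {y | g y ≥ ((k : ℝ) + 1) / n} :=
    measurableSet_le measurable_const hg
  have hs_meas : Measurable s :=
    Finset.measurable_sum _ fun k _ => measurable_const.indicator (hlevel k)
  set S := ∑ k ∈ Finset.range K, (n : ℝ)⁻¹ * u {y | g y ≥ ((k : ℝ) + 1) / n}
  have hfs : choquet u (fun x => f x + s x) = choquet u f + S :=
    choquet_add_sum_indicator hu hadd _ hlevel _ hf hfM
  have hs_val : choquet u s = S := by
    have h := choquet_add_sum_indicator hu hadd (Finset.range K) hlevel (fun _ => (n : ℝ)⁻¹)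
      measurable_const (f := fun _ => 0) (M := 0) (by simp)
    simp only [zero_add, choquet_zero hu] at h
    exact h
  have hfsM (x : X) : |f x + s x| ≤ M + N := (abs_add_le _ _).trans (add_le_add (hfM x) (hsN x))
  have hfgM (x : X) : |f x + g x| ≤ M + N := (abs_add_le _ _).trans (add_le_add (hfM x) (hgN x))
  have lower₁ : choquet u (fun x => f x + s x) ≤ choquet u (fun x => f x + g x) :=
    choquet_mono hu (hf.add hs_meas) (hf.add hg) hfsM hfgM fun x => by linarith [(hs x).1]
  have upper₁ : choquet u (fun x => f x + g x) ≤ choquet u (fun x => f x + s x) + (n : ℝ)⁻¹ :=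
    choquet_le_add_of_le_add hu (hf.add hg) (hf.add hs_meas) hfgM hfsM
      (inv_nonneg.2 n.cast_nonneg) fun x => by simp only [Pi.add_apply]; linarith [(hs x).2]
  have lower₂ : choquet u s ≤ choquet u g := choquet_mono hu hs_meas hg hsN hgN fun x => (hs x).1
  have upper₂ : choquet u g ≤ choquet u s + (n : ℝ)⁻¹ :=
    choquet_le_add_of_le_add hu hg hs_meas hgN hsN (inv_nonneg.2 n.cast_nonneg) fun x => (hs x).2
  rw [abs_le]
  constructor <;> linarith

theorem choquet_add (hu : IsCapacity u) (hadd : IsAdditive u) (hf : Measurable f)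
    (hg : Measurable g) (hfM : ∀ x, |f x| ≤ M) (hgN : ∀ x, |g x| ≤ N) :
    choquet u (fun x => f x + g x) = choquet u f + choquet u g := by
  obtain ⟨L, hL₀, hgL⟩ : ∃ L, 0 ≤ L ∧ ∀ x, |g x| ≤ L :=
    ⟨|N|, abs_nonneg N, fun x => (hgN x).trans (le_abs_self N)⟩
  have hf' (x : X) : |f x + -L| ≤ M + L :=
    abs_le.2 ⟨by linarith [abs_le.1 (hfM x)], by linarith [abs_le.1 (hfM x)]⟩
  have hg' (x : X) : |g x + L| ≤ 2 * L :=
    abs_le.2 ⟨by linarith [abs_le.1 (hgL x)], by linarith [abs_le.1 (hgL x)]⟩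
  have hg'₀ (x : X) : 0 ≤ g x + L := by linarith [abs_le.1 (hgL x)]
  calc choquet u (fun x => f x + g x)
      = choquet u (fun x => (f x + -L) + (g x + L)) := by ring_nf
    _ = choquet u f + choquet u g := by
      rw [choquet_add_of_nonneg hu hadd (hf.add_const _) (hg.add_const _) hf' hg' hg'₀,
        choquet_add_const hu hf hfM, choquet_add_const hu hg hgN]
      ring

theorem choquet_const_mul_of_pos (hu : IsCapacity u) (hf : Measurable f) (hfM : ∀ x, |f x| ≤ M)
    {c : ℝ} (hc : 0 < c) : choquet u (fun x => c * f x) = c * choquet u f := by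
  have hM := abs_nonneg M
  have hbound (x : X) := abs_le.1 ((hfM x).trans (le_abs_self M))
  have hlevel (r : ℝ) : {x | c * f x ≥ c * r} = {x | f x ≥ r} := by
    ext x
    exact mul_le_mul_iff_right₀ hc
  have hscale : ∫ r in -|M|..|M|, u (univ ∩ {x | f x ≥ r}) =
      c⁻¹ * ∫ r in c * -|M|..c * |M|, u (univ ∩ {x | c * f x ≥ r}) := by
    rw [← smul_eq_mul, ← integral_comp_mul_left _ hc.ne']
    simp only [hlevel]
  rw [← choquetOn_univ hu.2.1, ← choquetOn_univ hu.2.1,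
    choquetOn_eq_intervalIntegral hu MeasurableSet.univ hf (neg_nonpos.2 hM) hM hbound,
    choquetOn_eq_intervalIntegral hu MeasurableSet.univ (hf.const_mul c) (a := c * -|M|)
      (b := c * |M|) (by nlinarith) (by positivity)
      fun x => ⟨by nlinarith [hbound x], by nlinarith [hbound x]⟩,
    hscale]
  field_simp

theorem choquet_const_mul (hu : IsCapacity u) (hadd : IsAdditive u) (hf : Measurable f)
    (hfM : ∀ x, |f x| ≤ M) (c : ℝ) : choquet u (fun x => c * f x) = c * choquet u f := by
  rcases lt_trichotomy c 0 with hc | rfl | hc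
  · have hcancel : choquet u (fun x => c * f x) + choquet u (fun x => -c * f x) = 0 := by
      rw [← choquet_add hu hadd (hf.const_mul c) (hf.const_mul (-c)) (abs_mul_le_of_abs_le hfM c)
        (abs_mul_le_of_abs_le hfM (-c))]
      simpa using choquet_zero hu
    linarith [choquet_const_mul_of_pos hu hf hfM (neg_pos.2 hc)]
  · simpa using choquet_zero hu
  · exact choquet_const_mul_of_pos hu hf hfM hc

end

/-- If the capacity `u` is additive, the Choquet integral with respect to `u` is linear. -/
theorem choquet_linear_of_additive {X : Type*} [MeasurableSpace X] (u : Set X → ℝ)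
    (hu : IsCapacity u)
    (hadd : ∀ A B : Set X, MeasurableSet A → MeasurableSet B → Disjoint A B →
      u (A ∪ B) = u A + u B) :
    ∀ (a b : ℝ) (f g : X → ℝ), Measurable f → Measurable g →
      (∃ M, ∀ x, |f x| ≤ M) → (∃ M, ∀ x, |g x| ≤ M) →
      choquet u (fun x => a * f x + b * g x) = a * choquet u f + b * choquet u g := by
  rintro a b f g hf hg ⟨M, hfM⟩ ⟨N, hgN⟩
  rw [choquet_add hu hadd (hf.const_mul a) (hg.const_mul b) (abs_mul_le_of_abs_le hfM a)
      (abs_mul_le_of_abs_le hgN b),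
    choquet_const_mul hu hadd hf hfM, choquet_const_mul hu hadd hg hgN]
end

section
/- Let X be a measurable space, U a nonempty set of capacities on X equipped with the σ-algebra Σ_U, and f : X → ℝ a bounded measurable function. Then the map ξ(f) : U → ℝ given by ξ(f)(u) := I^u(f) is Σ_U-measurable, and it is bounded: for every real M, if |f(x)| ≤ M for all x ∈ X, then |I^u(f)| ≤ M for all u ∈ U. -/
open MeasureTheory

/-- The σ-algebra `Σ_U` on a set `U` of capacities, generated by the evaluation maps
`u ↦ u(A)` for measurable `A`. -/
def capSigma {X : Type*} [MeasurableSpace X] (U : Set (Set X → ℝ)) :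
    MeasurableSpace ↥U :=
  MeasurableSpace.generateFrom
    {S | ∃ (A : Set X) (Z : Set ℝ), MeasurableSet A ∧ MeasurableSet Z ∧
      S = {u : ↥U | u.1 A ∈ Z}}

/-! Each superlevel function `r ↦ u {f ≥ r}` of a capacity is antitone, so its integral over a
bounded interval is the limit of right Riemann sums. These are finite combinations of the
evaluation maps `u ↦ u A`, which are `Σ_U`-measurable by definition, so the Choquet integral is
`Σ_U`-measurable as well. For `|f| ≤ M` the superlevel function is `1` below `-M` and `0` above
`M`, whence `I^u(f) = ∫_{-M}^{M} u {f ≥ r} dr - M`, and this lies in `[-M, M]` because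
`0 ≤ u ≤ 1`. -/

open Filter Topology

noncomputable def rightRiemannSum (φ : ℝ → ℝ) (a b : ℝ) (n : ℕ) : ℝ :=
  (b - a) / n * ∑ k ∈ Finset.range n, φ (a + (b - a) / n * (k + 1))

theorem intervalIntegral_eq_step_mul_integral_rescale (φ : ℝ → ℝ) {a b : ℝ} (hab : a ≠ b)
    {n : ℕ} (hn : n ≠ 0) :
    ∫ r in a..b, φ r = (b - a) / n * ∫ s in (0 : ℝ)..n, φ (a + (b - a) / n * s) := by
  have hh : (b - a) / n ≠ 0 := div_ne_zero (sub_ne_zero.2 hab.symm) (Nat.cast_ne_zero.2 hn)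
  rw [intervalIntegral.integral_comp_add_mul _ hh, smul_eq_mul, mul_inv_cancel_left₀ hh]
  congr 1 <;> field_simp <;> ring

namespace Antitone

variable {φ : ℝ → ℝ} {a b : ℝ} {n : ℕ}

theorem rightRiemannSum_le_integral (hφ : Antitone φ) (hab : a ≤ b) (hn : n ≠ 0) :
    rightRiemannSum φ a b n ≤ ∫ r in a..b, φ r := by
  rcases hab.eq_or_lt with rfl | hab
  · simp [rightRiemannSum]
  have hrescaled : AntitoneOn (fun s ↦ φ (a + (b - a) / n * s)) (Set.Icc 0 (0 + n)) :=
    fun _ _ _ _ hst ↦ hφ (by gcongr)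
  rw [intervalIntegral_eq_step_mul_integral_rescale φ hab.ne hn, rightRiemannSum]
  gcongr
  simpa using hrescaled.sum_le_integral

theorem integral_le_rightRiemannSum_add (hφ : Antitone φ) (hab : a ≤ b) (hn : n ≠ 0) :
    ∫ r in a..b, φ r ≤ rightRiemannSum φ a b n + (b - a) / n * (φ a - φ b) := by
  rcases hab.eq_or_lt with rfl | hab
  · simp [rightRiemannSum]
  set g : ℝ → ℝ := fun s ↦ φ (a + (b - a) / n * s)
  have hg : AntitoneOn g (Set.Icc 0 (0 + n)) := fun _ _ _ _ hst ↦ hφ (by gcongr)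
  have htelescope : ∑ i ∈ Finset.range n, g i
      = ∑ i ∈ Finset.range n, g (i + 1) + (φ a - φ b) := by
    have hsucc := Finset.sum_range_succ' (fun i : ℕ ↦ g i) n
    rw [Finset.sum_range_succ] at hsucc
    have hg0 : g 0 = φ a := by simp [g]
    have hgn : g n = φ b := by
      simp only [g]
      rw [div_mul_cancel₀ _ (Nat.cast_ne_zero.2 hn), add_sub_cancel]
    push_cast at hsucc
    linarith
  calc ∫ r in a..b, φ r = (b - a) / n * ∫ s in (0 : ℝ)..n, g s :=
        intervalIntegral_eq_step_mul_integral_rescale φ hab.ne hn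
    _ ≤ (b - a) / n * ∑ i ∈ Finset.range n, g i := by
        gcongr
        simpa using hg.integral_le_sum
    _ = rightRiemannSum φ a b n + (b - a) / n * (φ a - φ b) := by
        rw [htelescope, rightRiemannSum, mul_add]

theorem tendsto_rightRiemannSum (hφ : Antitone φ) (hab : a ≤ b) :
    Tendsto (rightRiemannSum φ a b) atTop (𝓝 (∫ r in a..b, φ r)) := by
  have herror : Tendsto (fun n : ℕ ↦ (b - a) / n * (φ a - φ b)) atTop (𝓝 0) := by
    simpa using (tendsto_const_div_atTop_nhds_zero_nat (b - a)).mul_const (φ a - φ b)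
  have hlower : Tendsto (fun n : ℕ ↦ (∫ r in a..b, φ r) - (b - a) / n * (φ a - φ b)) atTop
      (𝓝 (∫ r in a..b, φ r)) := by
    simpa using (tendsto_const_nhds (x := ∫ r in a..b, φ r)).sub herror
  refine tendsto_of_tendsto_of_tendsto_of_le_of_le' hlower tendsto_const_nhds ?_ ?_
  · filter_upwards [eventually_ne_atTop 0] with n hn
    linarith [hφ.integral_le_rightRiemannSum_add hab hn]
  · filter_upwards [eventually_ne_atTop 0] with n hn
    exact hφ.rightRiemannSum_le_integral hab hn

end Antitone

theorem measurable_intervalIntegral_of_antitone {α : Type*} [m : MeasurableSpace α]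
    {φ : α → ℝ → ℝ} (hanti : ∀ p, Antitone (φ p)) (hmeas : ∀ r, Measurable fun p ↦ φ p r)
    (a b : ℝ) : Measurable fun p ↦ ∫ r in a..b, φ p r := by
  wlog hab : a ≤ b generalizing a b
  · simp_rw [intervalIntegral.integral_symm b a]
    exact (this b a (le_of_not_ge hab)).neg
  refine measurable_of_tendsto_metrizable (f := fun n p ↦ rightRiemannSum (φ p) a b n)
    (fun n ↦ ?_) (tendsto_pi_nhds.2 fun p ↦ (hanti p).tendsto_rightRiemannSum hab)
  simp only [rightRiemannSum]
  fun_prop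

theorem measurable_capSigma_eval {X : Type*} [MeasurableSpace X] (U : Set (Set X → ℝ))
    {A : Set X} (hA : MeasurableSet A) : Measurable[capSigma U] fun u : U ↦ u.1 A :=
  fun _ hZ ↦ MeasurableSpace.measurableSet_generateFrom ⟨A, _, hA, hZ, rfl⟩

namespace IsCapacity

variable {X : Type*} [MeasurableSpace X] {u : Set X → ℝ} {A : Set X} {f : X → ℝ} {M : ℝ}

theorem nonempty (hu : IsCapacity u) : Nonempty X := by
  by_contra hX
  have huniv := hu.2.1
  rw [Set.univ_eq_empty_iff.2 (not_nonempty_iff.1 hX), hu.1] at huniv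
  exact zero_ne_one huniv

theorem nonneg (hu : IsCapacity u) (hA : MeasurableSet A) : 0 ≤ u A :=
  hu.1 ▸ hu.2.2 ∅ A .empty hA (Set.empty_subset A)

theorem le_one (hu : IsCapacity u) (hA : MeasurableSet A) : u A ≤ 1 :=
  hu.2.1 ▸ hu.2.2 A Set.univ hA .univ (Set.subset_univ A)

theorem antitone_superlevel (hu : IsCapacity u) (hf : Measurable f) :
    Antitone fun r ↦ u {x | f x ≥ r} :=
  fun _ _ hrs ↦ hu.2.2 _ _ (hf measurableSet_Ici) (hf measurableSet_Ici) fun _ hx ↦ hrs.trans hx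

theorem choquet_eq_intervalIntegral_sub (hu : IsCapacity u) (hf : Measurable f)
    (hM : ∀ x, |f x| ≤ M) : choquet u f = (∫ r in -M..M, u {x | f x ≥ r}) - M := by
  have hM0 : 0 ≤ M := hu.nonempty.elim fun x ↦ (abs_nonneg _).trans (hM x)
  have hpos : ∫ r in Set.Ioi 0, u {x | f x ≥ r} = ∫ r in 0..M, u {x | f x ≥ r} := by
    rw [intervalIntegral.integral_of_le hM0]
    refine setIntegral_eq_of_subset_of_forall_sdiff_eq_zero measurableSet_Ioi
      Set.Ioc_subset_Ioi_self ?_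
    rintro r ⟨hr0, hrM⟩
    have hempty : {x | f x ≥ r} = ∅ := Set.eq_empty_of_forall_notMem fun x hx ↦
      hrM ⟨hr0, hx.trans (abs_le.1 (hM x)).2⟩
    rw [hempty, hu.1]
  have hneg : ∫ r in Set.Iio 0, (u {x | f x ≥ r} - 1) = ∫ r in -M..0, (u {x | f x ≥ r} - 1) := by
    rw [intervalIntegral.integral_of_le (neg_nonpos.2 hM0), integral_Ioc_eq_integral_Ioo]
    refine setIntegral_eq_of_subset_of_forall_sdiff_eq_zero measurableSet_Iio
      Set.Ioo_subset_Iio_self ?_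
    rintro r ⟨hr0, hrM⟩
    have huniv : {x | f x ≥ r} = Set.univ := Set.eq_univ_of_forall fun x ↦
      (le_of_not_gt fun hr ↦ hrM ⟨hr, hr0⟩).trans (abs_le.1 (hM x)).1
    rw [huniv, hu.2.1, sub_self]
  have hint (a b : ℝ) : IntervalIntegrable (fun r ↦ u {x | f x ≥ r}) volume a b :=
    (hu.antitone_superlevel hf).intervalIntegrable
  rw [choquet, hpos, hneg, intervalIntegral.integral_sub (hint _ _) intervalIntegrable_const,
    ← intervalIntegral.integral_add_adjacent_intervals (hint (-M) 0) (hint 0 M),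
    intervalIntegral.integral_const, smul_eq_mul]
  ring

theorem abs_choquet_le (hu : IsCapacity u) (hf : Measurable f) (hM : ∀ x, |f x| ≤ M) :
    |choquet u f| ≤ M := by
  have hM0 : 0 ≤ M := hu.nonempty.elim fun x ↦ (abs_nonneg _).trans (hM x)
  have hlower : 0 ≤ ∫ r in -M..M, u {x | f x ≥ r} :=
    intervalIntegral.integral_nonneg (by linarith) fun _ _ ↦ hu.nonneg (hf measurableSet_Ici)
  have hupper : ∫ r in -M..M, u {x | f x ≥ r} ≤ 2 * M := calc
    _ ≤ ∫ _ in -M..M, (1 : ℝ) :=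
      intervalIntegral.integral_mono_on (by linarith)
        (hu.antitone_superlevel hf).intervalIntegrable intervalIntegrable_const
        fun _ _ ↦ hu.le_one (hf measurableSet_Ici)
    _ = 2 * M := by rw [intervalIntegral.integral_const, smul_eq_mul]; ring
  rw [hu.choquet_eq_intervalIntegral_sub hf hM, abs_le]
  constructor <;> linarith

end IsCapacity

theorem choquet_expectation_measurable_bounded_general {X : Type*} [MeasurableSpace X]
    (U : Set (Set X → ℝ)) (hcap : ∀ u ∈ U, IsCapacity u)
    (f : X → ℝ) (hf : Measurable f) (hbdd : ∃ M, ∀ x, |f x| ≤ M) :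
    Measurable[capSigma U] (fun u : ↥U => choquet u.1 f) ∧
      ∀ M : ℝ, (∀ x, |f x| ≤ M) → ∀ u ∈ U, |choquet u f| ≤ M := by
  refine ⟨?_, fun M hM u hu ↦ (hcap u hu).abs_choquet_le hf hM⟩
  obtain ⟨M, hM⟩ := hbdd
  have hξ : (fun u : ↥U => choquet u.1 f) = fun u ↦ (∫ r in -M..M, u.1 {x | f x ≥ r}) - M :=
    funext fun u ↦ (hcap u.1 u.2).choquet_eq_intervalIntegral_sub hf hM
  rw [hξ]
  exact (measurable_intervalIntegral_of_antitone (m := capSigma U)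
    (fun u ↦ (hcap u.1 u.2).antitone_superlevel hf)
    (fun r ↦ measurable_capSigma_eval U (hf measurableSet_Ici)) (-M) M).sub_const M

/-- For a bounded measurable `f`, the Choquet expectation map `ξ(f) : u ↦ I^u(f)` is
`Σ_U`-measurable and bounded (by any bound of `f`). -/
theorem choquet_expectation_measurable_bounded {X : Type*} [MeasurableSpace X]
    (U : Set (Set X → ℝ)) (hUne : U.Nonempty) (hcap : ∀ u ∈ U, IsCapacity u)
    (f : X → ℝ) (hf : Measurable f) (hbdd : ∃ M, ∀ x, |f x| ≤ M) :
    Measurable[capSigma U] (fun u : ↥U => choquet u.1 f) ∧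
      ∀ M : ℝ, (∀ x, |f x| ≤ M) → ∀ u ∈ U, |choquet u f| ≤ M :=
  choquet_expectation_measurable_bounded_general U hcap f hf hbdd
end

section
/- On the three-point measurable space X = {0, 1, 2} with the powerset σ-algebra, define f := 11·𝟙_{{0}} + 1·𝟙_{{1}} and g := 11·𝟙_{{0}} + 10·𝟙_{{1}}, and define the additive capacities u₁(A) := (1/3)·|A| and u₂(A) := (1/2)·𝟙_A(0) + (1/8)·𝟙_A(1) + (3/8)·𝟙_A(2). Then f and g are comonotonic, and (I^{u₁}(f) − I^{u₂}(f))·(I^{u₁}(g) − I^{u₂}(g)) = −13/32; in particular the map u ↦ I^u(·) does not preserve comonotonicity. -/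
open MeasureTheory

/-- The act `f = 11·𝟙_{{0}} + 1·𝟙_{{1}}` on the three-point space. -/
noncomputable def fEll : Fin 3 → ℝ := fun x => if x = 0 then 11 else if x = 1 then 1 else 0

/-- The act `g = 11·𝟙_{{0}} + 10·𝟙_{{1}}` on the three-point space. -/
noncomputable def gEll : Fin 3 → ℝ := fun x => if x = 0 then 11 else if x = 1 then 10 else 0

/-- The uniform additive capacity `u₁(A) = |A|/3`. -/
noncomputable def uEll1 : Set (Fin 3) → ℝ := fun A => (A.ncard : ℝ) / 3

open Classical in
/-- The additive capacity `u₂ = (1/2)·δ₀ + (1/8)·δ₁ + (3/8)·δ₂`. -/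
noncomputable def uEll2 : Set (Fin 3) → ℝ := fun A =>
  (if (0 : Fin 3) ∈ A then (1 / 2 : ℝ) else 0) +
    (if (1 : Fin 3) ∈ A then (1 / 8 : ℝ) else 0) +
    (if (2 : Fin 3) ∈ A then (3 / 8 : ℝ) else 0)

/-!
Both capacities are additive, i.e. restrictions of probability measures, and for a probability
measure the layer-cake formula turns the Choquet integral of a nonnegative function into its
ordinary expectation. Hence `I^{u₁}(f) = 4`, `I^{u₂}(f) = 45/8`, `I^{u₁}(g) = 7`,
`I^{u₂}(g) = 27/4`, and the two differences `-13/8` and `1/4` have opposite signs.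
-/

theorem choquet_eq_setIntegral_Ioi_of_nonneg {X : Type*} {u : Set X → ℝ} {f : X → ℝ}
    (hu : u Set.univ = 1) (hf : 0 ≤ f) :
    choquet u f = ∫ r in Set.Ioi (0 : ℝ), u {x | f x ≥ r} := by
  have hneg : Set.EqOn (fun r => u {x | f x ≥ r} - 1) 0 (Set.Iio 0) := fun r hr => by
    have hall : {x | f x ≥ r} = Set.univ :=
      Set.eq_univ_of_forall fun x => (Set.mem_Iio.1 hr).le.trans (hf x)
    simp only [hall, hu, sub_self, Pi.zero_apply]
  rw [choquet, setIntegral_congr_fun measurableSet_Iio hneg]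
  simp

theorem choquet_measureReal_eq_integral {X : Type*} [MeasurableSpace X] (μ : Measure X)
    [IsProbabilityMeasure μ] {f : X → ℝ} (hf_int : Integrable f μ) (hf : 0 ≤ f) :
    choquet μ.real f = ∫ x, f x ∂μ := by
  rw [choquet_eq_setIntegral_Ioi_of_nonneg probReal_univ hf,
    hf_int.integral_eq_integral_meas_le (Filter.Eventually.of_forall hf)]

theorem choquet_sum_indicator_eq_sum_mul {X : Type*} [Fintype X] {w : X → ℝ} (hw : 0 ≤ w)
    (hw1 : ∑ x, w x = 1) {f : X → ℝ} (hf : 0 ≤ f) :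
    choquet (fun A => ∑ x, A.indicator w x) f = ∑ x, w x * f x := by
  let _ : MeasurableSpace X := ⊤
  have : MeasurableSingletonClass X := ⟨fun _ => trivial⟩
  set μ : Measure X := ∑ x, ENNReal.ofReal (w x) • Measure.dirac x
  have hw_indicator (A : Set X) (x : X) : 0 ≤ A.indicator w x :=
    Set.indicator_nonneg (fun y _ => hw y) x
  have hμ (A : Set X) : μ A = ENNReal.ofReal (∑ x, A.indicator w x) := by
    rw [ENNReal.ofReal_sum_of_nonneg fun x _ => hw_indicator A x]
    simp only [μ, Measure.coe_finsetSum, Measure.coe_smul, Finset.sum_apply, Pi.smul_apply,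
      Measure.dirac_apply, smul_eq_mul]
    refine Finset.sum_congr rfl fun x _ => ?_
    by_cases hx : x ∈ A <;> simp [hx]
  have : IsProbabilityMeasure μ := ⟨by simp [hμ, hw1]⟩
  have hμ_real (A : Set X) : μ.real A = ∑ x, A.indicator w x := by
    rw [measureReal_def, hμ,
      ENNReal.toReal_ofReal (Finset.sum_nonneg fun x _ => hw_indicator A x)]
  rw [show (fun A => ∑ x, A.indicator w x) = μ.real from funext fun A => (hμ_real A).symm,
    choquet_measureReal_eq_integral μ .of_finite hf, integral_fintype .of_finite]
  refine Finset.sum_congr rfl fun x _ => ?_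
  rw [hμ_real, Fintype.sum_eq_single x fun y hy => Set.indicator_of_notMem (s := {x}) hy w,
    Set.indicator_of_mem (Set.mem_singleton x), smul_eq_mul]

lemma uEll1_eq_sum_indicator : uEll1 = fun A => ∑ x, A.indicator (fun _ => (1 / 3 : ℝ)) x := by
  ext A
  classical
  simp [uEll1, Set.indicator_apply, Set.ncard_eq_toFinset_card', div_eq_mul_inv, Finset.sum_ite]

lemma uEll2_eq_sum_indicator : uEll2 = fun A => ∑ x, A.indicator ![1 / 2, 1 / 8, 3 / 8] x := by
  ext A
  classical
  simp [uEll2, Fin.sum_univ_three, Set.indicator_apply]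

lemma choquet_uEll1 {f : Fin 3 → ℝ} (hf : 0 ≤ f) :
    choquet uEll1 f = (f 0 + f 1 + f 2) / 3 := by
  rw [uEll1_eq_sum_indicator,
    choquet_sum_indicator_eq_sum_mul (fun _ => by norm_num) (by norm_num) hf,
    Fin.sum_univ_three]
  ring

lemma choquet_uEll2 {f : Fin 3 → ℝ} (hf : 0 ≤ f) :
    choquet uEll2 f = f 0 / 2 + f 1 / 8 + 3 * f 2 / 8 := by
  rw [uEll2_eq_sum_indicator, choquet_sum_indicator_eq_sum_mul
      (fun i => by fin_cases i <;> norm_num) (by simp [Fin.sum_univ_three]; norm_num) hf,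
    Fin.sum_univ_three]
  simp only [Matrix.cons_val_zero, Matrix.cons_val_one, Matrix.cons_val]
  ring

lemma fEll_nonneg : 0 ≤ fEll := fun x => by unfold fEll; split_ifs <;> norm_num

lemma gEll_nonneg : 0 ≤ gEll := fun x => by unfold gEll; split_ifs <;> norm_num

lemma comonotonic_fEll_gEll : Comonotonic fEll gEll := by
  intro x y
  fin_cases x <;> fin_cases y <;> norm_num [fEll, gEll]

/-- `f` and `g` are comonotonic, yet
`(I^{u₁}(f) − I^{u₂}(f))·(I^{u₁}(g) − I^{u₂}(g)) = −13/32`; in particular the Choquet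
expectations `ξ(f), ξ(g)` on `{u₁, u₂}` are not comonotonic. -/
theorem choquet_expectation_not_comonotonic :
    Comonotonic fEll gEll ∧
    (choquet uEll1 fEll - choquet uEll2 fEll) *
      (choquet uEll1 gEll - choquet uEll2 gEll) = -13 / 32 ∧
    ¬ Comonotonic (fun u : ↥({uEll1, uEll2} : Set (Set (Fin 3) → ℝ)) => choquet u.1 fEll)
        (fun u : ↥({uEll1, uEll2} : Set (Set (Fin 3) → ℝ)) => choquet u.1 gEll) := by
  have hprod : (choquet uEll1 fEll - choquet uEll2 fEll) *
      (choquet uEll1 gEll - choquet uEll2 gEll) = -13 / 32 := by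
    rw [choquet_uEll1 fEll_nonneg, choquet_uEll2 fEll_nonneg, choquet_uEll1 gEll_nonneg,
      choquet_uEll2 gEll_nonneg]
    norm_num [fEll, gEll, Fin.ext_iff]
  refine ⟨comonotonic_fEll_gEll, hprod, fun h => ?_⟩
  have := h ⟨uEll1, .inl rfl⟩ ⟨uEll2, .inr rfl⟩
  simp only at this
  linarith
end

section
/- For every natural number N ≥ 1 and every real number α > 1, the inequality Σ_{k=0}^{2N} (k/(2N))^α · C(2N, k) < 2^{2N−1} holds, where C(2N, k) is the binomial coefficient. (Consequently, in the Ellsberg single-urn model with distortion exponent α > 1 and a symmetric binomial second-order prior over the 2N+1 admissible capacities, the value of betting on the known-probability event strictly exceeds the value of betting on the unknown-probability event.) -/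
/-!
Since `x ^ α ≤ x` on `[0, 1]` for `α ≥ 1`, strictly for `0 < x < 1` and `α > 1`, the sum is
termwise at most `∑ (k / n) C(n, k)`, strictly so at `k = 1` once `n ≥ 2`; and that linear sum is
`2 ^ (n - 1)`, the mean `n / 2` of the binomial distribution times `2 ^ n / n`.
-/

open Finset

lemma sum_range_div_mul_choose {n : ℕ} (hn : n ≠ 0) :
    ∑ k ∈ range (n + 1), ((k : ℝ) / n) * (n.choose k : ℝ) = 2 ^ (n - 1) := by
  have hsum : ∑ k ∈ range (n + 1), (k : ℝ) * (n.choose k : ℝ) = n * 2 ^ (n - 1) := by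
    exact_mod_cast Nat.sum_range_mul_choose n
  have hn' : (n : ℝ) ≠ 0 := by exact_mod_cast hn
  simp_rw [div_mul_eq_mul_div, ← sum_div, hsum]
  field_simp

lemma sum_range_rpow_div_mul_choose_lt {n : ℕ} (hn : 2 ≤ n) {α : ℝ} (hα : 1 < α) :
    ∑ k ∈ range (n + 1), ((k : ℝ) / n) ^ α * (n.choose k : ℝ) < 2 ^ (n - 1) := by
  have hn_pos : (0 : ℝ) < n := by positivity
  rw [← sum_range_div_mul_choose (by omega : n ≠ 0)]
  apply sum_lt_sum
  · intro k hk
    have hk_le : (k : ℝ) ≤ n := by exact_mod_cast Nat.lt_succ_iff.mp (mem_range.mp hk)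
    gcongr
    exact Real.rpow_le_self_of_le_one (by positivity) (div_le_one_of_le₀ hk_le hn_pos.le) hα.le
  · refine ⟨1, mem_range.mpr (by omega), ?_⟩
    gcongr
    · exact_mod_cast Nat.choose_pos (by omega)
    · have h_lt_one : ((1 : ℕ) : ℝ) / n < 1 := (div_lt_one hn_pos).mpr (by exact_mod_cast hn)
      exact Real.rpow_lt_self_of_lt_one (by positivity) h_lt_one hα

/-- For `N ≥ 1` and real `α > 1`, one has
`Σ_{k=0}^{2N} (k/(2N))^α · C(2N,k) < 2^{2N−1}`.
(This inequality yields the strict preference `V₂(f₁) > V₂(f₂)` in the Ellsberg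
single-urn model with a symmetric binomial second-order prior.) -/
theorem ellsberg_binomial_prior_sum_lt (N : ℕ) (hN : 1 ≤ N) (α : ℝ) (hα : 1 < α) :
    ∑ k ∈ Finset.range (2 * N + 1), ((k : ℝ) / (2 * N : ℕ)) ^ α * (Nat.choose (2 * N) k : ℝ) <
      2 ^ (2 * N - 1) :=
  sum_range_rpow_div_mul_choose_lt (by omega) hα
end
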